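/- arXiv:2501.02714 — 2 statements merged into one kernel-verified Lean document; each statement's English description precedes it below -/
import Mathlib

section
/- Let X be a real normed linear space, x ∈ X nonzero, and V a linear subspace of X. Then V ⊆ x^⊥_B if and only if there exists a support functional f ∈ J(x) such that V ⊆ ker f. -/
/-! If `x` is Birkhoff–James orthogonal to the subspace `V`, then `x + V` has norm `‖x‖` in the
seminormed quotient `X ⧸ V`. A Hahn–Banach norming functional for `x + V` on the quotient, pulled
back along `X → X ⧸ V`, is a support functional at `x` vanishing on `V`. Conversely, if
`f ∈ J(x)` vanishes on `V`, then `‖x‖ = f (x + t • v) ≤ ‖x + t • v‖`. -/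

/-- Birkhoff-James orthogonality. -/
def BJOrth {X : Type*} [NormedAddCommGroup X] [NormedSpace ℝ X] (x y : X) : Prop :=
  ∀ t : ℝ, ‖x‖ ≤ ‖x + t • y‖

/-- The set of support functionals at `x`. -/
def suppFun {X : Type*} [NormedAddCommGroup X] [NormedSpace ℝ X] (x : X) :
    Set (X →L[ℝ] ℝ) := {f | ‖f‖ = 1 ∧ f x = ‖x‖}

section

variable {X : Type*} [NormedAddCommGroup X] [NormedSpace ℝ X]

theorem BJOrth.of_mem_suppFun {x y : X} {f : X →L[ℝ] ℝ} (hf : f ∈ suppFun x) (hy : f y = 0) :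
    BJOrth x y := fun t ↦
  calc ‖x‖ = f (x + t • y) := by simp [hy, hf.2]
    _ ≤ ‖x + t • y‖ :=
      (Real.le_norm_self _).trans ((f.le_of_opNorm_le hf.1.le _).trans_eq (one_mul _))

theorem mem_suppFun_of_opNorm_le_one {x : X} (hx : x ≠ 0) {f : X →L[ℝ] ℝ} (hf : ‖f‖ ≤ 1)
    (hfx : f x = ‖x‖) : f ∈ suppFun x := by
  refine ⟨hf.antisymm ?_, hfx⟩
  have : 1 * ‖x‖ ≤ ‖f‖ * ‖x‖ :=
    calc 1 * ‖x‖ = f x := by rw [one_mul, hfx]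
      _ ≤ ‖f‖ * ‖x‖ := (Real.le_norm_self _).trans (f.le_opNorm x)
  exact le_of_mul_le_mul_right this (norm_pos_iff.2 hx)

theorem Submodule.Quotient.norm_mk_eq_of_forall_bjOrth {x : X} {V : Submodule ℝ X}
    (h : ∀ v ∈ V, BJOrth x v) : ‖(Submodule.Quotient.mk x : X ⧸ V)‖ = ‖x‖ := by
  refine (Submodule.Quotient.norm_mk_le V x).antisymm (QuotientAddGroup.le_norm_iff.2 ?_)
  intro m hm
  have hmx : m - x ∈ V := (Submodule.Quotient.eq V).1 hm
  simpa using h _ hmx 1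

theorem exists_dual_vector_vanishing_of_forall_bjOrth (x : X) (V : Submodule ℝ X)
    (h : ∀ v ∈ V, BJOrth x v) : ∃ f : X →L[ℝ] ℝ, ‖f‖ ≤ 1 ∧ f x = ‖x‖ ∧ ∀ v ∈ V, f v = 0 := by
  obtain ⟨g, hg, hgx⟩ := exists_dual_vector'' ℝ (Submodule.Quotient.mk x : X ⧸ V)
  refine ⟨g.comp V.mkQL, ?_, ?_, fun v hv ↦ ?_⟩
  · refine ContinuousLinearMap.opNorm_le_bound _ zero_le_one fun y ↦ ?_
    calc ‖g (V.mkQL y)‖ ≤ 1 * ‖(Submodule.Quotient.mk y : X ⧸ V)‖ := g.le_of_opNorm_le hg _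
      _ ≤ 1 * ‖y‖ := by gcongr; exact Submodule.Quotient.norm_mk_le V y
  · simpa [Submodule.Quotient.norm_mk_eq_of_forall_bjOrth h] using hgx
  · simp [(Submodule.Quotient.mk_eq_zero V).2 hv]

end

theorem stmt_8 {X : Type*} [NormedAddCommGroup X] [NormedSpace ℝ X]
    (x : X) (hx : x ≠ 0) (V : Submodule ℝ X) :
    (∀ v ∈ V, BJOrth x v) ↔ ∃ f ∈ suppFun x, ∀ v ∈ V, f v = 0 := by
  constructor
  · intro h
    obtain ⟨f, hf, hfx, hfV⟩ := exists_dual_vector_vanishing_of_forall_bjOrth x V h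
    exact ⟨f, mem_suppFun_of_opNorm_le_one hx hf hfx, hfV⟩
  · rintro ⟨f, hf, hfV⟩ v hv
    exact BJOrth.of_mem_suppFun hf (hfV v hv)
end

section
/- Let X, Y be real normed linear spaces and x ∈ X nonzero. A bounded linear operator T : X → Y preserves Birkhoff-James orthogonality at x (i.e., x ⊥_B y implies Tx ⊥_B Ty for all y) if and only if for every extreme support functional f ∈ Ext J(x), Tx ⊥_B Tz for all z ∈ ker f. -/
open Set Metric

instance WeakDual.instLocallyConvexSpace {X : Type*} [NormedAddCommGroup X] [NormedSpace ℝ X] :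
    LocallyConvexSpace ℝ (WeakDual ℝ X) :=
  WeakBilin.locallyConvexSpace

theorem IsCompact.exists_mem_extremePoints_isMaxOn {E : Type*} [AddCommGroup E] [Module ℝ E]
    [TopologicalSpace E] [T2Space E] [IsTopologicalAddGroup E] [ContinuousSMul ℝ E]
    [LocallyConvexSpace ℝ E] {s : Set E} (hs : IsCompact s) (hne : s.Nonempty)
    (l : StrongDual ℝ E) : ∃ e ∈ s.extremePoints ℝ, IsMaxOn l s e := by
  obtain ⟨z, hzs, hz⟩ := hs.exists_isMaxOn hne l.continuous.continuousOn
  have hface : IsExposed ℝ s {y ∈ s | ∀ w ∈ s, l w ≤ l y} := fun _ => ⟨l, rfl⟩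
  obtain ⟨e, he⟩ := (hface.isCompact hs).extremePoints_nonempty ⟨z, hzs, hz⟩
  exact ⟨e, hface.isExtreme.extremePoints_subset_extremePoints he, he.1.2⟩

section SupportFunctional

variable {X : Type*} [NormedAddCommGroup X] [NormedSpace ℝ X] {x : X} {f : StrongDual ℝ X}

theorem mem_suppFun_of_norm_le_one (hx : x ≠ 0) (hf : ‖f‖ ≤ 1) (hfx : f x = ‖x‖) :
    f ∈ suppFun x := by
  refine ⟨le_antisymm hf ?_, hfx⟩
  have : 1 * ‖x‖ ≤ ‖f‖ * ‖x‖ := by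
    simpa [hfx] using f.le_opNorm x
  exact le_of_mul_le_mul_right this (norm_pos_iff.mpr hx)

theorem suppFun_eq (hx : x ≠ 0) : suppFun x = closedBall 0 1 ∩ {f | f x = ‖x‖} := by
  ext f
  simp only [mem_inter_iff, mem_closedBall_zero_iff, mem_ofPred_eq]
  exact ⟨fun hf => ⟨hf.1.le, hf.2⟩, fun hf => mem_suppFun_of_norm_le_one hx hf.1 hf.2⟩

theorem isCompact_preimage_toStrongDual_suppFun (hx : x ≠ 0) :
    IsCompact (WeakDual.toStrongDual ⁻¹' suppFun x) := by
  rw [suppFun_eq hx, preimage_inter]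
  exact (WeakDual.isCompact_closedBall 0 1).inter_right <|
    isClosed_eq (WeakDual.eval_continuous x) continuous_const

theorem exists_mem_extremePoints_suppFun_isMaxOn (hx : x ≠ 0) (hne : (suppFun x).Nonempty)
    (y : X) : ∃ φ ∈ (suppFun x).extremePoints ℝ, ∀ f ∈ suppFun x, f y ≤ φ y := by
  let evalY : StrongDual ℝ (WeakDual ℝ X) :=
    ⟨(topDualPairing ℝ X).flip y, WeakDual.eval_continuous y⟩
  obtain ⟨φ, hφ, hmax⟩ :=
    (isCompact_preimage_toStrongDual_suppFun hx).exists_mem_extremePoints_isMaxOn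
      (hne.preimage WeakDual.toStrongDual.surjective) evalY
  refine ⟨WeakDual.toStrongDual φ, ?_, fun f hf => @hmax (StrongDual.toWeakDual f) hf⟩
  rw [← image_preimage_eq (suppFun x) WeakDual.toStrongDual.surjective, ← image_extremePoints]
  exact mem_image_of_mem _ hφ

theorem apply_sub_smul_eq_zero_of_mem_suppFun (hx : x ≠ 0) (hf : f ∈ suppFun x) (y : X) :
    f (y - (f y / ‖x‖) • x) = 0 := by
  rw [map_sub, map_smul, hf.2, smul_eq_mul, div_mul_cancel₀ _ (norm_ne_zero_iff.mpr hx), sub_self]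

end SupportFunctional

namespace BJOrth

variable {X : Type*} [NormedAddCommGroup X] [NormedSpace ℝ X] {x y : X}

theorem zero_left (y : X) : BJOrth 0 y := fun _ => by
  simp only [norm_zero, norm_nonneg]

theorem neg_right (h : BJOrth x y) : BJOrth x (-y) := fun t => by
  simpa only [smul_neg, neg_smul] using h (-t)

theorem of_mem_suppFun_s12 {f : StrongDual ℝ X} (hf : f ∈ suppFun x) (hy : f y = 0) :
    BJOrth x y := fun t =>
  calc ‖x‖ = f (x + t • y) := by simp [hf.2, hy]
    _ ≤ ‖f‖ * ‖x + t • y‖ := (le_abs_self _).trans (f.le_opNorm _)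
    _ = ‖x + t • y‖ := by rw [hf.1, one_mul]

theorem norm_le_norm_add_smul_add_smul (h : BJOrth x y) {c t : ℝ} (htc : 0 ≤ t * c) :
    ‖x‖ ≤ ‖x + t • (y + c • x)‖ := by
  have hs : 0 < 1 + t * c := by linarith
  have hrw : x + t • (y + c • x) = (1 + t * c) • (x + (t / (1 + t * c)) • y) := by
    match_scalars <;> field_simp
  rw [hrw, norm_smul, Real.norm_of_nonneg hs.le]
  exact (h _).trans (le_mul_of_one_le_left (norm_nonneg _) (by linarith))

theorem exists_mem_suppFun_apply_eq_zero (hx : x ≠ 0) (h : BJOrth x y) :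
    ∃ f ∈ suppFun x, f y = 0 := by
  let S : Submodule ℝ X := ℝ ∙ y
  have : IsClosed (S : Set X) := Submodule.closed_of_finiteDimensional S
  -- `x` is a nearest point to `0` in `x + ℝ ∙ y`, so its class in `X ⧸ ℝ ∙ y` keeps its norm.
  have hnorm : ‖(Submodule.Quotient.mk x : X ⧸ S)‖ = ‖x‖ := by
    refine le_antisymm (Submodule.Quotient.norm_mk_le S x) ?_
    change ‖x‖ ≤ ‖(x : X ⧸ S.toAddSubgroup)‖
    rw [QuotientAddGroup.norm_mk, Submodule.coe_toAddSubgroup, le_infDist ⟨0, S.zero_mem⟩]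
    rintro _ hz
    obtain ⟨t, rfl⟩ := Submodule.mem_span_singleton.mp hz
    simpa only [dist_eq_norm, sub_eq_add_neg, ← neg_smul] using h (-t)
  obtain ⟨g, hg, hgx⟩ := exists_dual_vector ℝ (Submodule.Quotient.mk x : X ⧸ S)
    (by rw [hnorm]; exact norm_ne_zero_iff.mpr hx)
  refine ⟨g.comp S.mkQL, mem_suppFun_of_norm_le_one hx ?_ ?_, ?_⟩
  · refine ContinuousLinearMap.opNorm_le_bound _ zero_le_one fun z => ?_
    calc ‖g (S.mkQL z)‖ ≤ ‖g‖ * ‖(Submodule.Quotient.mk z : X ⧸ S)‖ := g.le_opNorm _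
      _ ≤ 1 * ‖z‖ := by
        rw [hg, one_mul, one_mul]
        exact Submodule.Quotient.norm_mk_le S z
  · simpa [hnorm] using hgx
  · simp [(Submodule.Quotient.mk_eq_zero S).mpr (Submodule.mem_span_singleton_self y)]

theorem exists_mem_extremePoints_suppFun_apply_nonneg (hx : x ≠ 0) (h : BJOrth x y) :
    ∃ φ ∈ (suppFun x).extremePoints ℝ, 0 ≤ φ y := by
  obtain ⟨f, hf, hfy⟩ := exists_mem_suppFun_apply_eq_zero hx h
  obtain ⟨φ, hφ, hmax⟩ := exists_mem_extremePoints_suppFun_isMaxOn hx ⟨f, hf⟩ y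
  exact ⟨φ, hφ, hfy ▸ hmax f hf⟩

theorem exists_mem_extremePoints_suppFun_mul_apply_nonneg (hx : x ≠ 0) (h : BJOrth x y)
    (t : ℝ) : ∃ φ ∈ (suppFun x).extremePoints ℝ, 0 ≤ t * φ y := by
  rcases le_total 0 t with ht | ht
  · obtain ⟨φ, hφ, hφy⟩ := exists_mem_extremePoints_suppFun_apply_nonneg hx h
    exact ⟨φ, hφ, mul_nonneg ht hφy⟩
  · obtain ⟨φ, hφ, hφy⟩ := exists_mem_extremePoints_suppFun_apply_nonneg hx h.neg_right
    exact ⟨φ, hφ, mul_nonneg_of_nonpos_of_nonpos ht (by simpa using hφy)⟩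

end BJOrth

theorem stmt_12_general {X Y : Type*} [NormedAddCommGroup X] [NormedSpace ℝ X]
    [NormedAddCommGroup Y] [NormedSpace ℝ Y]
    (x : X) (T : X →L[ℝ] Y) :
    (∀ y : X, BJOrth x y → BJOrth (T x) (T y)) ↔
      ∀ f ∈ Set.extremePoints ℝ (suppFun x), ∀ z : X, f z = 0 → BJOrth (T x) (T z) := by
  refine ⟨fun H f hf z hz => H z (.of_mem_suppFun (extremePoints_subset hf) hz), ?_⟩
  intro H y hy t
  rcases eq_or_ne x 0 with rfl | hx
  · simpa only [map_zero] using BJOrth.zero_left (T y) t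
  obtain ⟨φ, hφ, htφ⟩ := hy.exists_mem_extremePoints_suppFun_mul_apply_nonneg hx t
  set c := φ y / ‖x‖
  have hTy : T y = T (y - c • x) + c • T x := by
    rw [map_sub, map_smul, sub_add_cancel]
  have htc : 0 ≤ t * c := by
    rw [← mul_div_assoc]
    exact div_nonneg htφ (norm_nonneg x)
  rw [hTy]
  exact (H φ hφ _ (apply_sub_smul_eq_zero_of_mem_suppFun hx (extremePoints_subset hφ) y))
    |>.norm_le_norm_add_smul_add_smul htc

theorem stmt_12 {X Y : Type*} [NormedAddCommGroup X] [NormedSpace ℝ X]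
    [NormedAddCommGroup Y] [NormedSpace ℝ Y]
    (x : X) (hx : x ≠ 0) (T : X →L[ℝ] Y) :
    (∀ y : X, BJOrth x y → BJOrth (T x) (T y)) ↔
      ∀ f ∈ Set.extremePoints ℝ (suppFun x), ∀ z : X, f z = 0 → BJOrth (T x) (T z) :=
  stmt_12_general x T
end
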